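/- Consider the list schedule of a finite nonempty list of jobs with nonnegative sizes on m ≥ 1 machines with zero initial loads, and let F be its free time. Then: (a) once a machine is assigned a job of size strictly greater than F, no further job is ever assigned to that machine; (b) consequently each machine is assigned at most one job of size strictly greater than F; and (c) the number of jobs in the list of size strictly greater than F is at most m − 1. -/

import Mathlib

/-- The machine of minimum load, ties broken by lowest machine index. -/
noncomputable def bestMachine {m : ℕ} (hm : 0 < m) (ℓ : Fin m → ℝ) : Fin m :=
  (Finset.univ.filter fun i => ∀ j, ℓ i ≤ ℓ j).min' (by
    obtain ⟨i, -, hi⟩ := Finset.exists_min_image Finset.univ ℓ ⟨⟨0, hm⟩, Finset.mem_univ _⟩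
    exact ⟨i, Finset.mem_filter.mpr ⟨Finset.mem_univ _, fun j => hi j (Finset.mem_univ _)⟩⟩)

/-- One step of list scheduling: assign a job of size `s` to the best machine. -/
noncomputable def schedStep {m : ℕ} (hm : 0 < m) (ℓ : Fin m → ℝ) (s : ℝ) : Fin m → ℝ :=
  Function.update ℓ (bestMachine hm ℓ) (ℓ (bestMachine hm ℓ) + s)

/-- Machine loads after list-scheduling `jobs` starting from initial loads `ℓ`. -/
noncomputable def loadsAfter {m : ℕ} (hm : 0 < m) (ℓ : Fin m → ℝ) : List ℝ → (Fin m → ℝ)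
  | [] => ℓ
  | s :: rest => loadsAfter hm (schedStep hm ℓ s) rest

/-- The free time: minimum machine load after all jobs are assigned. -/
noncomputable def freeTime {m : ℕ} (hm : 0 < m) (ℓ : Fin m → ℝ) (jobs : List ℝ) : ℝ :=
  Finset.univ.inf' ⟨⟨0, hm⟩, Finset.mem_univ _⟩ (loadsAfter hm ℓ jobs)

/-- Total completion time of the list schedule. -/
noncomputable def totalCompletion {m : ℕ} (hm : 0 < m) (ℓ : Fin m → ℝ) : List ℝ → ℝ
  | [] => 0
  | s :: rest => (ℓ (bestMachine hm ℓ) + s) + totalCompletion hm (schedStep hm ℓ s) rest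

/-- The sequence of machines to which successive jobs are assigned. -/
noncomputable def assignSeq {m : ℕ} (hm : 0 < m) (ℓ : Fin m → ℝ) : List ℝ → List (Fin m)
  | [] => []
  | s :: rest => bestMachine hm ℓ :: assignSeq hm (schedStep hm ℓ s) rest

/-- The optimal free time of a multiset of jobs: min over orderings, zero initial loads. -/
noncomputable def optFreeTime {m : ℕ} (hm : 0 < m) (J : Multiset ℝ) : ℝ :=
  sInf {F | ∃ l : List ℝ, (l : Multiset ℝ) = J ∧ F = freeTime hm (fun _ => 0) l}

/-- The optimal total completion time of a multiset of jobs: min over orderings. -/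
noncomputable def optTotalCompletion {m : ℕ} (hm : 0 < m) (J : Multiset ℝ) : ℝ :=
  sInf {C | ∃ l : List ℝ, (l : Multiset ℝ) = J ∧ C = totalCompletion hm (fun _ => 0) l}
section Lemmas
variable {m : ℕ} (hm : 0 < m)

lemma bestMachine_le (ℓ : Fin m → ℝ) (j : Fin m) : ℓ (bestMachine hm ℓ) ≤ ℓ j := by
  have h : bestMachine hm ℓ ∈ Finset.univ.filter fun i => ∀ j, ℓ i ≤ ℓ j :=
    Finset.min'_mem _ _
  exact (Finset.mem_filter.mp h).2 j

lemma le_schedStep {s : ℝ} (hs : 0 ≤ s) (ℓ : Fin m → ℝ) (j : Fin m) :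
    ℓ j ≤ schedStep hm ℓ s j := by
  unfold schedStep
  rw [Function.update_apply]
  split
  · next h => rw [h]; linarith
  · exact le_refl _

lemma le_loadsAfter {l : List ℝ} (hl : ∀ s ∈ l, 0 ≤ s) (ℓ : Fin m → ℝ) (j : Fin m) :
    ℓ j ≤ loadsAfter hm ℓ l j := by
  induction l generalizing ℓ with
  | nil => simp [loadsAfter]
  | cons s rest ih =>
    exact le_trans (le_schedStep hm (hl s (by simp)) ℓ j)
      (ih (fun x hx => hl x (by simp [hx])) _)

lemma loadsAfter_append (l1 l2 : List ℝ) (ℓ : Fin m → ℝ) :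
    loadsAfter hm ℓ (l1 ++ l2) = loadsAfter hm (loadsAfter hm ℓ l1) l2 := by
  induction l1 generalizing ℓ with
  | nil => simp [loadsAfter]
  | cons s rest ih => simp [loadsAfter, ih]

lemma assignSeq_getD (jobs : List ℝ) (ℓ : Fin m → ℝ) (t : ℕ) (ht : t < jobs.length)
    (d : Fin m) :
    (assignSeq hm ℓ jobs).getD t d = bestMachine hm (loadsAfter hm ℓ (jobs.take t)) := by
  induction jobs generalizing ℓ t with
  | nil => simp at ht
  | cons s rest ih =>
    cases t with
    | zero => simp [assignSeq, loadsAfter]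
    | succ t =>
      simp only [assignSeq, List.getD_cons_succ, List.take_succ_cons, loadsAfter]
      exact ih _ _ (by simpa using ht) 

lemma loadsAfter_take_succ (jobs : List ℝ) (ℓ : Fin m → ℝ) (t : ℕ) (ht : t < jobs.length) :
    loadsAfter hm ℓ (jobs.take (t+1))
      = schedStep hm (loadsAfter hm ℓ (jobs.take t)) (jobs.getD t 0) := by
  have h : jobs.take (t+1) = jobs.take t ++ [jobs.getD t 0] := by
    rw [List.take_succ]
    simp [List.getElem?_eq_getElem ht, List.getD_eq_getElem _ _ ht]
  rw [h, loadsAfter_append]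
  rfl

end Lemmas

lemma length_le_one_of_pairwise {α : Type*} {R : α → α → Prop} {l : List α}
    (h : l.Pairwise R) (h2 : ∀ a b, a ∈ l → b ∈ l → R a b → False) : l.length ≤ 1 := by
  match l with
  | [] => simp
  | [_] => simp
  | a :: b :: rest =>
    exact absurd ((List.pairwise_cons.mp h).1 b (by simp))
      (fun hr => h2 a b (by simp) (by simp) hr)

lemma map_getD_range {α : Type*} (l : List α) (d : α) :
    (List.range l.length).map (fun t => l.getD t d) = l := by
  induction l with
  | nil => simp
  | cons a l ih =>
    rw [List.length_cons, List.range_succ_eq_map, List.map_cons, List.map_map]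
    simp only [List.getD_cons_zero]
    congr 1

/-- (a) once a machine receives a job of size > F, no later job
goes to that machine; (b) each machine gets at most one job of size > F;
(c) at most m - 1 jobs have size > F. -/
theorem stmt13 (m : ℕ) (hm : 0 < m) (jobs : List ℝ) (hne : jobs ≠ [])
    (hjobs : ∀ s ∈ jobs, 0 ≤ s) :
    (∀ t t', t < t' → t' < jobs.length →
        freeTime hm (fun _ => 0) jobs < jobs.getD t 0 →
        (assignSeq hm (fun _ => 0) jobs).getD t' ⟨0, hm⟩ ≠
          (assignSeq hm (fun _ => 0) jobs).getD t ⟨0, hm⟩) ∧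
    (∀ i : Fin m,
        ((List.range jobs.length).filter
          (fun t => (assignSeq hm (fun _ => 0) jobs).getD t ⟨0, hm⟩ = i ∧
            freeTime hm (fun _ => 0) jobs < jobs.getD t 0)).length ≤ 1) ∧
    (jobs.filter (fun s => freeTime hm (fun _ => 0) jobs < s)).length ≤ m - 1 := by
  set F := freeTime hm (fun _ => 0) jobs with hF
  set ℓ0 : Fin m → ℝ := fun _ => 0 with hℓ0
  set A := assignSeq hm ℓ0 jobs with hA
  set n := jobs.length with hn
  -- intermediate loads
  set L : ℕ → Fin m → ℝ := fun t => loadsAfter hm ℓ0 (jobs.take t) with hL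
  have hsub : ∀ t, ∀ s ∈ jobs.take t, (0:ℝ) ≤ s := fun t s hs => hjobs s (List.take_subset _ _ hs)
  have hLnonneg : ∀ t j, 0 ≤ L t j := fun t j => le_loadsAfter hm (hsub t) ℓ0 j
  -- monotonicity between times
  have hmono : ∀ t t' : ℕ, t ≤ t' → ∀ j, L t j ≤ L t' j := by
    intro t t' htt j
    have h1 : jobs.take t' = jobs.take t ++ (jobs.take t').drop t := by
      conv_lhs => rw [← List.take_append_drop t (jobs.take t')]
      rw [List.take_take, min_eq_left htt]
    rw [hL]
    simp only
    rw [h1, loadsAfter_append]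
    exact le_loadsAfter hm
      (fun s hs => hjobs s (List.take_subset _ _ (List.drop_subset _ _ hs))) _ j
  -- final loads and F; loadsAfter jobs = L n
  have hfin : loadsAfter hm ℓ0 jobs = L n := by
    rw [hL]; simp only [hn, List.take_length]
  obtain ⟨j0, -, hj0⟩ := Finset.exists_mem_eq_inf' (⟨⟨0, hm⟩, Finset.mem_univ _⟩ :
    (Finset.univ : Finset (Fin m)).Nonempty) (loadsAfter hm ℓ0 jobs)
  have hj0F : L n j0 = F := by rw [hF, freeTime, ← hfin, hj0]
  -- core: big job at time t → its machine's load exceeds F from time t+1 on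
  have hcore : ∀ t t' : ℕ, t < t' → t' ≤ n → F < jobs.getD t 0 →
      F < L t' (bestMachine hm (L t)) := by
    intro t t' htt ht' hbig
    have htn : t < n := lt_of_lt_of_le htt ht'
    set i := bestMachine hm (L t) with hi
    have hstep : L (t+1) i = L t i + jobs.getD t 0 := by
      rw [hL]; simp only
      rw [loadsAfter_take_succ hm jobs ℓ0 t htn]
      simp [schedStep, ← hL, hi]
      simp [hL]
    have h1 : F < L (t+1) i := by
      have := hLnonneg t i
      rw [hstep]; linarith
    exact lt_of_lt_of_le h1 (hmono (t+1) t' (by omega) i)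
  -- assigned machine load at the time of assignment is ≤ F
  have hminF : ∀ t : ℕ, t < n → L t (bestMachine hm (L t)) ≤ F := by
    intro t htn
    calc L t (bestMachine hm (L t)) ≤ L t j0 := bestMachine_le hm _ j0
    _ ≤ L n j0 := hmono t n (le_of_lt htn) j0
    _ = F := hj0F
  have hAgetD : ∀ t, t < n → A.getD t ⟨0, hm⟩ = bestMachine hm (L t) := by
    intro t htn
    rw [hA, assignSeq_getD hm jobs ℓ0 t htn]
  -- part (a)
  have parta : ∀ t t', t < t' → t' < n → F < jobs.getD t 0 →
      A.getD t' ⟨0, hm⟩ ≠ A.getD t ⟨0, hm⟩ := by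
    intro t t' htt ht' hbig heq
    rw [hAgetD t (lt_trans htt ht'), hAgetD t' ht'] at heq
    have h1 : F < L t' (bestMachine hm (L t)) := hcore t t' htt (le_of_lt ht') hbig
    rw [← heq] at h1
    exact absurd (hminF t' ht') (not_le.mpr h1)
  refine ⟨parta, ?_, ?_⟩
  · -- part (b)
    intro i
    apply length_le_one_of_pairwise (R := (· < ·))
      (List.Pairwise.filter _ (List.pairwise_lt_range (n := n)))
    intro a b ha hb hab
    rw [List.mem_filter] at ha hb
    have ha2 := of_decide_eq_true ha.2
    have hb2 := of_decide_eq_true hb.2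
    have hbn : b < n := List.mem_range.mp hb.1
    exact parta a b hab hbn ha2.2 (hb2.1.trans ha2.1.symm)
  · -- part (c)
    have hmapjobs : (List.range n).map (fun t => jobs.getD t 0) = jobs := by
      rw [hn]; exact map_getD_range jobs 0
    set p : ℝ → Bool := fun s => decide (F < s) with hp
    have hfilt : (jobs.filter p).length
        = ((List.range n).filter (fun t => p (jobs.getD t 0))).length := by
      conv_lhs => rw [← hmapjobs]
      rw [List.filter_map, List.length_map]
      rfl
    rw [hfilt]
    set Lb := (List.range n).filter (fun t => p (jobs.getD t 0)) with hLb
    set φ : ℕ → Fin m := fun t => A.getD t ⟨0, hm⟩ with hφ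
    have hmem : ∀ t ∈ Lb, t < n ∧ F < jobs.getD t 0 := by
      intro t ht
      rw [hLb, List.mem_filter] at ht
      exact ⟨List.mem_range.mp ht.1, of_decide_eq_true ht.2⟩
    have hnotj0 : ∀ t ∈ Lb, φ t ≠ j0 := by
      intro t ht heq
      obtain ⟨htn, hbig⟩ := hmem t ht
      have h1 : F < L n (bestMachine hm (L t)) := hcore t n htn le_rfl hbig
      rw [← hAgetD t htn] at h1
      rw [show A.getD t ⟨0, hm⟩ = j0 from heq, hj0F] at h1
      exact lt_irrefl F h1
    have hnodup : (Lb.map φ).Nodup := by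
      have hpairLb : Lb.Pairwise (· < ·) :=
        List.Pairwise.filter _ (List.pairwise_lt_range (n := n))
      have hp2 : Lb.Pairwise (fun a b => φ a ≠ φ b) := by
        refine List.Pairwise.imp_of_mem (fun {a b} ha hb hab => ?_) hpairLb
        exact (parta a b hab (hmem b hb).1 (hmem a ha).2).symm
      exact List.pairwise_map.mpr hp2
    have hsubset : (Lb.map φ).toFinset ⊆ Finset.univ.erase j0 := by
      intro x hx
      rw [List.mem_toFinset, List.mem_map] at hx
      obtain ⟨t, ht, rfl⟩ := hx
      exact Finset.mem_erase.mpr ⟨hnotj0 t ht, Finset.mem_univ _⟩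
    calc Lb.length = (Lb.map φ).length := (List.length_map _).symm
    _ = (Lb.map φ).toFinset.card := (List.toFinset_card_of_nodup hnodup).symm
    _ ≤ (Finset.univ.erase j0).card := Finset.card_le_card hsubset
    _ = m - 1 := by rw [Finset.card_erase_of_mem (Finset.mem_univ _)]; simp
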